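/- arXiv:1812.11774 — 3 statements merged into one kernel-verified Lean document; each statement's English description precedes it below -/
import Mathlib

section
/- For every integer n ≥ 2 and every i with 1 ≤ i < n, a(n,i) = a(n,i+1) + a(n−1,i). -/
open scoped Classical

noncomputable section

/-- The element of `c` minimizing `key`, if `c` is nonempty. -/
def pickMin {n : ℕ} {α : Type*} [LinearOrder α] (key : Fin n → α)
    (c : Finset (Fin n)) : Option (Fin n) :=
  if h : c.Nonempty then some (Classical.choose (Finset.exists_min_image c key h)) else none

/-- The set of matched `V`-vertices after the first `j` arrivals of the online greedy
process on the bipartite graph with `U`-side arrival order `u_0, u_1, …` and adjacency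
`adj`, in which each arriving `u_j` is matched to its currently unmatched neighbor
minimizing `key` (if any). -/
def greedyRun {n : ℕ} {α : Type*} [LinearOrder α] (adj : ℕ → Fin n → Prop)
    (key : Fin n → α) : ℕ → Finset (Fin n)
  | 0 => ∅
  | j + 1 =>
    match pickMin key ((Finset.univ.filter fun i => adj j i) \ greedyRun adj key j) with
    | some v => insert v (greedyRun adj key j)
    | none => greedyRun adj key j

/-- The `V`-vertex that the arriving vertex `u_j` (0-indexed) gets matched to, if any. -/
def greedyMatchU {n : ℕ} {α : Type*} [LinearOrder α] (adj : ℕ → Fin n → Prop)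
    (key : Fin n → α) (j : ℕ) : Option (Fin n) :=
  pickMin key ((Finset.univ.filter fun i => adj j i) \ greedyRun adj key j)

/-- Adjacency of the monotone graph `MonotoneG` (0-indexed):
`u_j` is adjacent to `v_i` iff `j ≤ i`. -/
def monoAdj (n : ℕ) : ℕ → Fin n → Prop := fun j i => j ≤ (i : ℕ)

/-- The set of matched `V`-vertices produced by the Ranking greedy process on `MonotoneG`
with permutation `π` (where `π i` is the rank of `v_i`, 0-indexed). -/
def rankMatched (n : ℕ) (π : Equiv.Perm (Fin n)) : Finset (Fin n) :=
  greedyRun (monoAdj n) (fun i => π i) n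

/-- `x(π)`: the number of edges of the matching produced by Ranking on `MonotoneG`. -/
def xSize (n : ℕ) (π : Equiv.Perm (Fin n)) : ℕ := (rankMatched n π).card

/-- `a(n) = Σ_π x(π)`, over all `n!` permutations. -/
def aVal (n : ℕ) : ℕ := ∑ π : Equiv.Perm (Fin n), xSize n π

/-- `a(n,i)` (with `i` 1-indexed): the number of permutations `π` of `{1,…,n}` for which
the vertex of rank `i` under `π` is matched by the Ranking greedy process on `MonotoneG`. -/
def aIdx (n i : ℕ) : ℕ :=
  (Finset.univ.filter fun π : Equiv.Perm (Fin n) =>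
    ∃ v : Fin n, (π v : ℕ) = i - 1 ∧ v ∈ rankMatched n π).card

/-- `d(m,i)` (with `i` 1-indexed): the number of permutations of `{1,…,m}` all of whose
fixed points (if any) lie among the first `i` items. -/
def dIdx (m i : ℕ) : ℕ :=
  (Finset.univ.filter fun σ : Equiv.Perm (Fin m) => ∀ x, σ x = x → (x : ℕ) < i).card

/-- `d(m)`: the number of derangements of `{1,…,m}`. -/
def numDer (m : ℕ) : ℕ :=
  (Finset.univ.filter fun σ : Equiv.Perm (Fin m) => ∀ x, σ x ≠ x).card

/-- The key for the greedy-by-price process: buy the cheapest available item,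
breaking ties in favor of the smaller index. -/
def priceKey {n : ℕ} (p : Fin n → ℝ) : Fin n → Lex (ℝ × ℕ) := fun i => toLex (p i, (i : ℕ))

/-- The utility `y(u_j)` of buyer `u_j` (0-indexed) in the greedy-by-price process:
`1 - p v` if `u_j` buys item `v`, and `0` if `u_j` remains unmatched. -/
def utility (n : ℕ) (adj : ℕ → Fin n → Prop) (p : Fin n → ℝ) (j : ℕ) : ℝ :=
  (greedyMatchU adj (priceKey p) j).elim 0 (fun v => 1 - p v)

/-- The revenue `r(v)` from item `v` in the greedy-by-price process:
`p v` if `v` is sold, and `0` otherwise. -/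
def revenue (n : ℕ) (adj : ℕ → Fin n → Prop) (p : Fin n → ℝ) (v : Fin n) : ℝ :=
  if v ∈ greedyRun adj (priceKey p) n then p v else 0

/-- The `m`-th harmonic number `H_m = Σ_{i=1}^m 1/i` (with `H_0 = 0`). -/
def harm (m : ℕ) : ℝ := ∑ i ∈ Finset.range m, (1 : ℝ) / (i + 1)

/-!
Read the Ranking process rank by rank instead of arrival by arrival. Let `f r` be the index of
the vertex of rank `r` and `c r` the number of matched vertices of smaller rank. Then the vertex
of rank `r` is matched iff `c r ≤ f r`, and it is matched to `u_{c r}`: the first `c r` arrivals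
took the matched vertices of smaller rank, and `u_{c r}` is the first arrival for which it is the
best available neighbour.

So `a(n, r + 1)` counts the permutations `f` (rank ↦ index) with `c r ≤ f r`. Among them, those
with `f r = c r ≤ f (r + 1)` correspond, by deleting rank `r` and the value `c r`, to the
permutations of `n - 1` elements whose rank-`r` vertex is matched (the deletion does not change how
the earlier values compare with anything `≤ c r`, hence not `c r` itself); for all others, swapping
the ranks `r` and `r + 1` gives exactly the permutations whose rank-`(r + 1)` vertex is matched.
-/

open Equiv Finset Function

lemma pickMin_empty {n : ℕ} {α : Type*} [LinearOrder α] (key : Fin n → α) :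
    pickMin key ∅ = none :=
  dif_neg Finset.not_nonempty_empty

lemma pickMin_eq_some {n : ℕ} {α : Type*} [LinearOrder α] {key : Fin n → α}
    (hkey : Injective key) {c : Finset (Fin n)} {w : Fin n} (hw : w ∈ c)
    (hmin : ∀ u ∈ c, key w ≤ key u) : pickMin key c = some w := by
  have hne : c.Nonempty := ⟨w, hw⟩
  obtain ⟨hmem, hle⟩ := Classical.choose_spec (c.exists_min_image key hne)
  rw [pickMin, dif_pos hne]
  exact congrArg some (hkey ((hle w hw).antisymm (hmin _ hmem)))

lemma greedyRun_succ_of_greedyMatchU_eq_some {n : ℕ} {α : Type*} [LinearOrder α]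
    {adj : ℕ → Fin n → Prop} {key : Fin n → α} {j : ℕ} {v : Fin n}
    (h : greedyMatchU adj key j = some v) :
    greedyRun adj key (j + 1) = insert v (greedyRun adj key j) := by
  rw [greedyMatchU] at h
  rw [greedyRun, h]

lemma greedyRun_succ_of_greedyMatchU_eq_none {n : ℕ} {α : Type*} [LinearOrder α]
    {adj : ℕ → Fin n → Prop} {key : Fin n → α} {j : ℕ}
    (h : greedyMatchU adj key j = none) :
    greedyRun adj key (j + 1) = greedyRun adj key j := by
  rw [greedyMatchU] at h
  rw [greedyRun, h]

lemma Fin.val_succAbove {m : ℕ} (p : Fin (m + 1)) (x : Fin m) :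
    (p.succAbove x : ℕ) = if (x : ℕ) < p then (x : ℕ) else (x : ℕ) + 1 := by
  unfold Fin.succAbove
  split_ifs <;> simp_all [Fin.lt_def]

def insertPerm {m : ℕ} (p q : Fin (m + 1)) (τ : Perm (Fin m)) : Perm (Fin (m + 1)) :=
  (finSuccEquiv' p).trans (τ.optionCongr.trans (finSuccEquiv' q).symm)

section InsertPerm

variable {m : ℕ} (p q : Fin (m + 1)) (τ : Perm (Fin m))

@[simp]
lemma insertPerm_apply_self : insertPerm p q τ p = q := by
  simp [insertPerm]

@[simp]
lemma insertPerm_apply_succAbove (x : Fin m) :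
    insertPerm p q τ (p.succAbove x) = q.succAbove (τ x) := by
  simp [insertPerm]

lemma insertPerm_bijective :
    Bijective fun x : Fin (m + 1) × Perm (Fin m) => insertPerm p x.1 x.2 := by
  refine (Fintype.bijective_iff_injective_and_card _).2
    ⟨fun ⟨q, τ⟩ ⟨q', τ'⟩ h => ?_, by simp [Fintype.card_perm, Nat.factorial_succ]⟩
  have hq : q = q' := by simpa using DFunLike.congr_fun h p
  subst hq
  refine Prod.ext rfl (Equiv.ext fun x => Fin.succAbove_right_injective (p := q) ?_)
  simpa using DFunLike.congr_fun h (p.succAbove x)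

end InsertPerm

namespace MonotoneRanking

def matchCount (f : ℕ → ℕ) : ℕ → ℕ
  | 0 => 0
  | r + 1 => matchCount f r + if matchCount f r ≤ f r then 1 else 0

def IsTightAt (f : ℕ → ℕ) (r : ℕ) : Prop :=
  f r = matchCount f r ∧ matchCount f r ≤ f (r + 1)

section MatchCount

variable {f g : ℕ → ℕ} {r s j t : ℕ}

lemma matchCount_succ (f : ℕ → ℕ) (r : ℕ) :
    matchCount f (r + 1) = matchCount f r + if matchCount f r ≤ f r then 1 else 0 := rfl

lemma matchCount_le_succ (f : ℕ → ℕ) (r : ℕ) : matchCount f r ≤ matchCount f (r + 1) :=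
  Nat.le_add_right _ _

lemma matchCount_monotone (f : ℕ → ℕ) : Monotone (matchCount f) :=
  monotone_nat_of_le_succ (matchCount_le_succ f)

lemma matchCount_le_self (f : ℕ → ℕ) (r : ℕ) : matchCount f r ≤ r := by
  induction r with
  | zero => rfl
  | succ r ih => rw [matchCount_succ]; split_ifs <;> omega

lemma matchCount_lt_of_lt (hrs : r < s) (h : matchCount f r ≤ f r) :
    matchCount f r < matchCount f s := by
  have := matchCount_monotone f (Nat.succ_le_of_lt hrs)
  rw [matchCount_succ, if_pos h] at this
  omega

lemma eq_of_matchCount_eq (hr : matchCount f r ≤ f r) (hs : matchCount f s ≤ f s)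
    (h : matchCount f r = matchCount f s) : r = s := by
  by_contra hne
  rcases Nat.lt_or_gt_of_ne hne with hlt | hlt
  · exact (matchCount_lt_of_lt hlt hr).ne h
  · exact (matchCount_lt_of_lt hlt hs).ne h.symm

lemma exists_matchCount_eq (h : j < matchCount f s) :
    ∃ r < s, matchCount f r = j ∧ matchCount f r ≤ f r := by
  induction s with
  | zero => exact absurd h (Nat.not_lt_zero j)
  | succ s ih =>
    by_cases hjs : j < matchCount f s
    · obtain ⟨r, hrs, hr⟩ := ih hjs
      exact ⟨r, hrs.trans s.lt_succ_self, hr⟩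
    · rw [matchCount_succ] at h
      split_ifs at h with hs
      · exact ⟨s, s.lt_succ_self, by omega, hs⟩
      · omega

lemma matchCount_eq_of_min_eq (h : ∀ k < r, min (f k) t = min (g k) t)
    (ht : matchCount f r ≤ t) : matchCount f r = matchCount g r := by
  induction r with
  | zero => rfl
  | succ r ih =>
    have e := ih (fun k hk => h k (by omega)) ((matchCount_le_succ f r).trans ht)
    have hmin := h r r.lt_succ_self
    have hle := (matchCount_le_succ f r).trans ht
    rw [matchCount_succ, matchCount_succ, ← e]
    split_ifs <;> omega

lemma matchCount_succ_le_iff_of_swap (hlt : ∀ k < r, g k = f k) (hr : g r = f (r + 1))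
    (hr1 : g (r + 1) = f r) :
    matchCount f (r + 1) ≤ f (r + 1) ↔ matchCount g r ≤ g r ∧ ¬ IsTightAt g r := by
  have e : matchCount g r = matchCount f r :=
    matchCount_eq_of_min_eq (fun k hk => by rw [hlt k hk]) (matchCount_le_self g r)
  rw [IsTightAt, e, hr, hr1, matchCount_succ]
  split_ifs <;> omega

end MatchCount

/-- `σ` maps ranks to vertices (it is `π⁻¹` for the `π` of `rankMatched`); the value `0` beyond
`n` is never read. -/
def vertexSeq {n : ℕ} (σ : Perm (Fin n)) (r : ℕ) : ℕ :=
  if h : r < n then σ ⟨r, h⟩ else 0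

lemma vertexSeq_val {n : ℕ} (σ : Perm (Fin n)) (k : Fin n) : vertexSeq σ k = σ k := by
  simp [vertexSeq]

def numMatchedAtRank (n r : ℕ) : ℕ :=
  #{σ : Perm (Fin n) | matchCount (vertexSeq σ) r ≤ vertexSeq σ r}

section Ranking

variable {n : ℕ} (π : Perm (Fin n)) {u v : Fin n} {j : ℕ}

def countBelow (v : Fin n) : ℕ := matchCount (vertexSeq π.symm) (π v)

lemma vertexSeq_symm_apply (v : Fin n) : vertexSeq π.symm (π v) = v := by
  rw [vertexSeq_val, symm_apply_apply]

lemma countBelow_mono (h : π u ≤ π v) : countBelow π u ≤ countBelow π v :=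
  matchCount_monotone _ h

lemma eq_of_countBelow_eq (hu : countBelow π u ≤ u) (hv : countBelow π v ≤ v)
    (h : countBelow π u = countBelow π v) : u = v :=
  π.injective <| Fin.ext <| eq_of_matchCount_eq (by rwa [vertexSeq_symm_apply])
    (by rwa [vertexSeq_symm_apply]) h

lemma exists_countBelow_eq (h : j < countBelow π v) :
    ∃ w, countBelow π w = j ∧ countBelow π w ≤ w := by
  obtain ⟨r, hr, hrj, hwin⟩ := exists_matchCount_eq h
  have hrn : r < n := hr.trans (π v).isLt
  have hc : countBelow π (π.symm ⟨r, hrn⟩) = matchCount (vertexSeq π.symm) r := by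
    rw [countBelow, apply_symm_apply]
  refine ⟨π.symm ⟨r, hrn⟩, hc.trans hrj, ?_⟩
  rwa [hc, ← vertexSeq_val π.symm ⟨r, hrn⟩]

def matchedBefore (j : ℕ) : Finset (Fin n) := {v | countBelow π v < j ∧ countBelow π v ≤ v}

lemma le_countBelow_of_notMem_matchedBefore (hjv : j ≤ v) (hv : v ∉ matchedBefore π j) :
    j ≤ countBelow π v ∧ (countBelow π v = j → countBelow π v ≤ v) := by
  simp only [matchedBefore, mem_filter, mem_univ, true_and] at hv
  omega

lemma greedyMatchU_monoAdj (hj : greedyRun (monoAdj n) (fun i => π i) j = matchedBefore π j) :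
    greedyMatchU (monoAdj n) (fun i => π i) j =
      pickMin (fun i => π i) {v | j ≤ (v : ℕ) ∧ v ∉ matchedBefore π j} := by
  rw [greedyMatchU, hj]
  congr 1
  ext v
  rw [mem_sdiff, mem_filter, mem_filter]
  simp only [mem_univ, true_and, monoAdj]

lemma greedyMatchU_monoAdj_eq_some {w : Fin n}
    (hj : greedyRun (monoAdj n) (fun i => π i) j = matchedBefore π j)
    (hwj : countBelow π w = j) (hww : countBelow π w ≤ w) :
    greedyMatchU (monoAdj n) (fun i => π i) j = some w := by
  rw [greedyMatchU_monoAdj π hj]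
  refine pickMin_eq_some π.injective ?_ fun u hu => ?_
  · simp only [matchedBefore, mem_filter, mem_univ, true_and]
    omega
  · simp only [mem_filter, mem_univ, true_and] at hu
    have hu' := le_countBelow_of_notMem_matchedBefore π hu.1 hu.2
    by_contra! hlt
    have hle := countBelow_mono π hlt.le
    exact hlt.ne (congrArg π (eq_of_countBelow_eq π (hu'.2 (by omega)) hww (by omega)))

lemma greedyMatchU_monoAdj_eq_none
    (hj : greedyRun (monoAdj n) (fun i => π i) j = matchedBefore π j)
    (hw : ∀ w, countBelow π w = j → (w : ℕ) < countBelow π w) :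
    greedyMatchU (monoAdj n) (fun i => π i) j = none := by
  rw [greedyMatchU_monoAdj π hj, ← pickMin_empty (fun i => π i)]
  congr 1
  refine eq_empty_of_forall_notMem fun u hu => ?_
  simp only [mem_filter, mem_univ, true_and] at hu
  obtain ⟨hju, hwin⟩ := le_countBelow_of_notMem_matchedBefore π hu.1 hu.2
  rcases hju.eq_or_lt with h | h
  · exact (hw u h.symm).not_ge (hwin h.symm)
  · obtain ⟨w, hwj, hww⟩ := exists_countBelow_eq π h
    exact (hw w hwj).not_ge hww

lemma greedyRun_monoAdj (j : ℕ) :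
    greedyRun (monoAdj n) (fun i => π i) j = matchedBefore π j := by
  induction j with
  | zero => simp [greedyRun, matchedBefore]
  | succ j ih =>
    by_cases hw : ∃ w, countBelow π w = j ∧ countBelow π w ≤ w
    · obtain ⟨w, hwj, hww⟩ := hw
      rw [greedyRun_succ_of_greedyMatchU_eq_some (greedyMatchU_monoAdj_eq_some π ih hwj hww), ih]
      ext v
      simp only [matchedBefore, mem_insert, mem_filter, mem_univ, true_and]
      constructor
      · rintro (rfl | ⟨h1, h2⟩) <;> omega
      · rintro ⟨h1, h2⟩
        by_cases hvj : countBelow π v = j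
        · exact Or.inl (eq_of_countBelow_eq π h2 hww (hvj.trans hwj.symm))
        · exact Or.inr ⟨by omega, h2⟩
    · push Not at hw
      rw [greedyRun_succ_of_greedyMatchU_eq_none (greedyMatchU_monoAdj_eq_none π ih hw), ih]
      ext v
      simp only [matchedBefore, mem_filter, mem_univ, true_and]
      have := hw v
      omega

lemma mem_rankMatched_iff : v ∈ rankMatched n π ↔ countBelow π v ≤ v := by
  rw [rankMatched, greedyRun_monoAdj]
  simp only [matchedBefore, mem_filter, mem_univ, true_and]
  exact and_iff_right_of_imp fun h => h.trans_lt v.isLt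

end Ranking

lemma aIdx_succ_eq {n r : ℕ} (hr : r < n) : aIdx n (r + 1) = numMatchedAtRank n r := by
  refine card_equiv (Equiv.inv _) fun π => ?_
  have hv : ∀ v, (π v : ℕ) = r ↔ v = π.symm ⟨r, hr⟩ := fun v => by
    rw [eq_symm_apply, Fin.ext_iff]
  simp only [mem_filter, mem_univ, true_and, Nat.add_sub_cancel, hv, exists_eq_left,
    mem_rankMatched_iff, countBelow, apply_symm_apply, Equiv.inv_apply, Perm.inv_def]
  rw [← vertexSeq_val π.symm ⟨r, hr⟩]

lemma card_filter_matched_and_not_isTightAt {n r : ℕ} (hr : r + 1 < n) :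
    #{σ : Perm (Fin n) | matchCount (vertexSeq σ) r ≤ vertexSeq σ r ∧
      ¬ IsTightAt (vertexSeq σ) r} = numMatchedAtRank n (r + 1) := by
  set a : Fin n := ⟨r, by omega⟩
  set b : Fin n := ⟨r + 1, hr⟩
  refine (card_equiv (Equiv.mulRight (swap a b)) fun σ => ?_).symm
  have hval : ∀ k : Fin n, vertexSeq (σ * swap a b) k = vertexSeq σ (swap a b k) := by
    simp [vertexSeq_val, Perm.mul_apply]
  simp only [mem_filter, mem_univ, true_and, coe_mulRight]
  refine matchCount_succ_le_iff_of_swap (fun k hk => ?_) ?_ ?_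
  · have hka : (⟨k, by omega⟩ : Fin n) ≠ a := Fin.ne_of_val_ne (show k ≠ r by omega)
    have hkb : (⟨k, by omega⟩ : Fin n) ≠ b := Fin.ne_of_val_ne (show k ≠ r + 1 by omega)
    simpa [swap_apply_of_ne_of_ne hka hkb] using hval ⟨k, by omega⟩
  · simpa using hval a
  · simpa using hval b

lemma isTightAt_insertPerm_iff {m r : ℕ} (hr : r < m) (q : Fin (m + 1)) (τ : Perm (Fin m)) :
    IsTightAt (vertexSeq (insertPerm ⟨r, by omega⟩ q τ)) r ↔
      (q : ℕ) = matchCount (vertexSeq τ) r ∧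
        matchCount (vertexSeq τ) r ≤ vertexSeq τ r := by
  set p : Fin (m + 1) := ⟨r, by omega⟩
  set σ := insertPerm p q τ
  have hσ : ∀ x : Fin m,
      vertexSeq σ (if (x : ℕ) < r then x else x + 1) = q.succAbove (τ x) := by
    intro x
    rw [← insertPerm_apply_succAbove, ← vertexSeq_val, Fin.val_succAbove]
  have hmin : ∀ k < r, min (vertexSeq σ k) q = min (vertexSeq τ k) q := by
    intro k hk
    have := hσ ⟨k, by omega⟩
    simp only [hk, if_true] at this
    rw [this, vertexSeq_val τ ⟨k, by omega⟩, Fin.val_succAbove]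
    split_ifs <;> omega
  have hr_σ : vertexSeq σ r = q := by
    rw [← insertPerm_apply_self p q τ]
    exact vertexSeq_val σ p
  have hr1_σ := hσ ⟨r, hr⟩
  simp only [lt_irrefl, if_false] at hr1_σ
  rw [IsTightAt, hr_σ, hr1_σ, vertexSeq_val τ ⟨r, hr⟩, Fin.val_succAbove]
  constructor
  · rintro ⟨hq, hle⟩
    rw [← matchCount_eq_of_min_eq hmin hq.ge, ← hq]
    exact ⟨rfl, by split_ifs at hle <;> omega⟩
  · rintro ⟨hq, hle⟩
    rw [← matchCount_eq_of_min_eq (fun k hk => (hmin k hk).symm) hq.ge, ← hq]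
    exact ⟨rfl, by split_ifs <;> omega⟩

lemma card_filter_isTightAt {m r : ℕ} (hr : r < m) :
    #{σ : Perm (Fin (m + 1)) | IsTightAt (vertexSeq σ) r} = numMatchedAtRank m r := by
  calc #{σ : Perm (Fin (m + 1)) | IsTightAt (vertexSeq σ) r}
      = #{x : Fin (m + 1) × Perm (Fin m) | (x.1 : ℕ) = matchCount (vertexSeq x.2) r ∧
          matchCount (vertexSeq x.2) r ≤ vertexSeq x.2 r} :=
        (card_equiv (Equiv.ofBijective _ (insertPerm_bijective ⟨r, by omega⟩)) fun x => by
          simp [isTightAt_insertPerm_iff hr]).symm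
    _ = numMatchedAtRank m r := by
        have hlt : ∀ τ : Perm (Fin m), matchCount (vertexSeq τ) r < m + 1 :=
          fun τ => (matchCount_le_self _ r).trans_lt (by omega)
        refine card_nbij' Prod.snd (fun τ => (⟨matchCount (vertexSeq τ) r, hlt τ⟩, τ))
          (fun x hx => by simp_all) (fun τ hτ => by simp_all) (fun x hx => ?_) (fun τ _ => rfl)
        simp only [coe_filter, mem_univ, true_and, Set.mem_ofPred_eq] at hx
        exact Prod.ext (Fin.ext hx.1.symm) rfl

lemma numMatchedAtRank_succ {m r : ℕ} (hr : r < m) :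
    numMatchedAtRank (m + 1) r = numMatchedAtRank (m + 1) (r + 1) + numMatchedAtRank m r := by
  have hsplit := card_filter_add_card_filter_not
    (s := {σ : Perm (Fin (m + 1)) | matchCount (vertexSeq σ) r ≤ vertexSeq σ r})
    (fun σ => IsTightAt (vertexSeq σ) r)
  rw [filter_filter, filter_filter, card_filter_matched_and_not_isTightAt (by omega)] at hsplit
  rw [numMatchedAtRank, ← hsplit, ← card_filter_isTightAt hr, add_comm]
  congr 2
  exact filter_congr fun σ _ => and_iff_right_of_imp fun h => h.1.ge

end MonotoneRanking

open MonotoneRanking in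
theorem stmt_4_general (n i : ℕ) (h1 : 1 ≤ i) (h2 : i < n) :
    aIdx n i = aIdx n (i + 1) + aIdx (n - 1) i := by
  obtain ⟨m, rfl⟩ : ∃ m, n = m + 1 := ⟨n - 1, by omega⟩
  obtain ⟨r, rfl⟩ : ∃ r, i = r + 1 := ⟨i - 1, by omega⟩
  rw [Nat.add_sub_cancel, aIdx_succ_eq (by omega), aIdx_succ_eq (by omega),
    aIdx_succ_eq (by omega)]
  exact numMatchedAtRank_succ (by omega)

/-- For every integer `n ≥ 2` and every `i` with `1 ≤ i < n`,
`a(n,i) = a(n,i+1) + a(n−1,i)`. -/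
theorem stmt_4 (n i : ℕ) (hn : 2 ≤ n) (h1 : 1 ≤ i) (h2 : i < n) :
    aIdx n i = aIdx n (i + 1) + aIdx (n - 1) i :=
  stmt_4_general n i h1 h2
end
end

section
/- For every integer n ≥ 1 and every permutation π of {1, …, n}: if the Ranking greedy process on MonotoneG with permutation π matches v_i to u_a and matches v_j to u_b, and π(i) < π(j), then a < b; that is, the order in which vertices of V get matched is consistent with the order of their ranks under π. -/
open scoped Classical

noncomputable section

theorem pickMin_spec {n : ℕ} {α : Type*} [LinearOrder α] {key : Fin n → α}
    {c : Finset (Fin n)} {v : Fin n} (h : pickMin key c = some v) :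
    v ∈ c ∧ ∀ x ∈ c, key v ≤ key x := by
  unfold pickMin at h
  split at h
  · rename_i hne
    obtain ⟨hmem, hmin⟩ := Classical.choose_spec (Finset.exists_min_image c key hne)
    cases h
    exact ⟨hmem, hmin⟩
  · exact absurd h (by simp)

theorem greedyRun_mono {n : ℕ} {α : Type*} [LinearOrder α] (adj : ℕ → Fin n → Prop)
    (key : Fin n → α) {j j' : ℕ} (h : j ≤ j') :
    greedyRun adj key j ⊆ greedyRun adj key j' := by
  induction j' with
  | zero => simpa [Nat.le_zero.mp h] using Finset.Subset.refl _
  | succ k ih =>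
    rcases Nat.lt_or_ge j (k+1) with hk | hk
    · refine (ih (Nat.lt_succ_iff.mp hk)).trans ?_
      show greedyRun adj key k ⊆ greedyRun adj key (k+1)
      rw [greedyRun]
      rcases hp : pickMin key ((Finset.univ.filter fun i => adj k i) \ greedyRun adj key k) with _ | v
      · simp
      · simp [Finset.subset_insert]
    · have : j = k + 1 := le_antisymm h hk
      subst this; exact Finset.Subset.refl _

/-- For every `n ≥ 1` and permutation `π`: if the Ranking greedy process on `MonotoneG`
with permutation `π` matches `v_i` to `u_a` and `v_j` to `u_b` (0-indexed arrival steps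
`a, b < n`), and `π(i) < π(j)`, then `a < b`: the order in which vertices of `V` get
matched is consistent with the order of their ranks under `π`. -/
theorem stmt_13 (n : ℕ) (hn : 1 ≤ n) (π : Equiv.Perm (Fin n)) (a b : ℕ)
    (ha : a < n) (hb : b < n) (vi vj : Fin n)
    (hvi : greedyMatchU (monoAdj n) (fun i => π i) a = some vi)
    (hvj : greedyMatchU (monoAdj n) (fun i => π i) b = some vj)
    (hlt : π vi < π vj) : a < b := by
  by_contra hab
  push_neg at hab
  obtain ⟨hvi_mem, _⟩ := pickMin_spec hvi
  obtain ⟨_, hvj_min⟩ := pickMin_spec hvj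
  rcases Nat.lt_or_ge b a with hba | hba
  · -- vi available at step b
    have hvi_d := Finset.mem_sdiff.mp hvi_mem
    have hadj : monoAdj n a vi := by simpa using (Finset.mem_filter.mp hvi_d.1).2
    have hmem_b : vi ∈ (Finset.univ.filter fun i => monoAdj n b i) \
        greedyRun (monoAdj n) (fun i => π i) b := by
      refine Finset.mem_sdiff.mpr ⟨Finset.mem_filter.mpr ⟨Finset.mem_univ _, ?_⟩, ?_⟩
      · exact le_trans (le_of_lt hba) hadj
      · intro hc
        exact hvi_d.2 (greedyRun_mono _ _ (le_of_lt hba) hc)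
    exact absurd (hvj_min vi hmem_b) (not_le.mpr hlt)
  · have : a = b := le_antisymm hba hab
    subst this
    rw [hvi] at hvj
    cases hvj
    exact lt_irrefl _ hlt
end
end

section
/- Let G(U, V; E) be a bipartite graph with parts of size n and pairwise distinct prices p_1, …, p_n ∈ [1/e, 1] on V. For a vertex v ∈ V, let y_{−v}(u) denote the utility of u in the greedy-by-price process run on the graph obtained from G by deleting v. Then for every u ∈ U, y(u) ≥ y_{−v}(u); that is, removing an item never increases, and adding an item never decreases, the utility of any buyer. -/
open scoped Classical

noncomputable section

/-!
Compare the matched sets `R j` of the run on `G` and `R' j` of the run on `G - v`. At every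
time `insert v (R' j) = insert x (R j)` for some item `x`: the two runs differ by at most one
exchange. This is preserved by each arrival, because the candidates of `u_j` in `G - v` are
then exactly its candidates in `G` other than `x`; if `u_j` buys `x` in `G`, it buys its next
best candidate in `G - v`, which becomes the new `x`. So `u_j` chooses from fewer candidates
in `G - v`, and its cheapest one there is no cheaper.
-/

section PickMin

variable {n : ℕ} {α : Type*} [LinearOrder α] {key : Fin n → α} {c c' : Finset (Fin n)}
  {m x : Fin n}

lemma pickMin_spec_s16 (h : pickMin key c = some m) : m ∈ c ∧ ∀ y ∈ c, key m ≤ key y := by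
  unfold pickMin at h
  split_ifs at h with hc
  cases h
  exact Classical.choose_spec (Finset.exists_min_image c key hc)

lemma pickMin_eq_none_iff : pickMin key c = none ↔ c = ∅ := by
  unfold pickMin
  split_ifs with hc
  · simp [hc.ne_empty]
  · simp [Finset.not_nonempty_iff_eq_empty.mp hc]

lemma pickMin_eq_some_of_forall_le (hkey : Function.Injective key) (hm : m ∈ c)
    (hmin : ∀ y ∈ c, key m ≤ key y) : pickMin key c = some m := by
  obtain ⟨m', hm'⟩ := Option.ne_none_iff_exists'.mp
    (mt (pickMin_eq_none_iff (key := key)).mp (Finset.ne_empty_of_mem hm))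
  obtain ⟨hm'c, hm'min⟩ := pickMin_spec_s16 hm'
  rw [hm', hkey (le_antisymm (hm'min m hm) (hmin m' hm'c))]

lemma pickMin_erase_of_ne (hkey : Function.Injective key) (h : pickMin key c ≠ some x) :
    pickMin key (c.erase x) = pickMin key c := by
  rcases hc : pickMin key c with _ | m
  · rw [pickMin_eq_none_iff] at hc ⊢
    simp [hc]
  · obtain ⟨hmc, hmin⟩ := pickMin_spec_s16 hc
    have hmx : m ≠ x := fun hmx => h (hmx ▸ hc)
    exact pickMin_eq_some_of_forall_le hkey (Finset.mem_erase.mpr ⟨hmx, hmc⟩)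
      fun y hy => hmin y (Finset.mem_of_mem_erase hy)

lemma exists_pickMin_le_of_subset (hsub : c' ⊆ c) (h : pickMin key c' = some m) :
    ∃ m₀, pickMin key c = some m₀ ∧ key m₀ ≤ key m := by
  obtain ⟨hmc', -⟩ := pickMin_spec_s16 h
  obtain ⟨m₀, hm₀⟩ := Option.ne_none_iff_exists'.mp
    (mt (pickMin_eq_none_iff (key := key)).mp (Finset.ne_empty_of_mem (hsub hmc')))
  exact ⟨m₀, hm₀, (pickMin_spec_s16 hm₀).2 m (hsub hmc')⟩

end PickMin

section Greedy

variable {n : ℕ} {α : Type*} [LinearOrder α] {key : Fin n → α}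

lemma greedyRun_succ (adj : ℕ → Fin n → Prop) (j : ℕ) :
    greedyRun adj key (j + 1) =
      (greedyMatchU adj key j).elim (greedyRun adj key j) (insert · (greedyRun adj key j)) := by
  rw [greedyRun, greedyMatchU]
  cases pickMin key _ <;> rfl

lemma exists_insert_elim_pickMin_erase_eq (hkey : Function.Injective key) {v x : Fin n}
    {R R' : Finset (Fin n)} (h : insert v R' = insert x R) (c : Finset (Fin n)) :
    ∃ y, insert v ((pickMin key (c.erase x)).elim R' (insert · R')) =
      insert y ((pickMin key c).elim R (insert · R)) := by
  by_cases hx : pickMin key c = some x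
  · rw [hx]
    rcases pickMin key (c.erase x) with _ | m
    · exact ⟨x, by simp [h]⟩
    · exact ⟨m, by simp only [Option.elim_some]; rw [Finset.insert_comm, h]⟩
  · refine ⟨x, ?_⟩
    rw [pickMin_erase_of_ne hkey hx]
    rcases pickMin key c with _ | m
    · exact h
    · simp only [Option.elim_some]
      rw [Finset.insert_comm, h, Finset.insert_comm]

lemma filter_sdiff_eq_erase {P Q : Fin n → Prop} {v x : Fin n} {R R' : Finset (Fin n)}
    (hQ : ∀ i, Q i ↔ P i ∧ i ≠ v) (h : insert v R' = insert x R) :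
    (Finset.univ.filter Q) \ R' = ((Finset.univ.filter P) \ R).erase x := by
  ext i
  have hi := Finset.ext_iff.mp h i
  simp only [Finset.mem_insert] at hi
  simp only [Finset.mem_sdiff, Finset.mem_filter, Finset.mem_univ, true_and, Finset.mem_erase,
    hQ]
  tauto

lemma exists_insert_greedyRun_delete_eq (hkey : Function.Injective key)
    (adj : ℕ → Fin n → Prop) (v : Fin n) (j : ℕ) :
    ∃ x, insert v (greedyRun (fun a b => adj a b ∧ b ≠ v) key j) =
      insert x (greedyRun adj key j) := by
  induction j with
  | zero => exact ⟨v, rfl⟩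
  | succ j ih =>
    obtain ⟨x, hx⟩ := ih
    rw [greedyRun_succ, greedyRun_succ, greedyMatchU, greedyMatchU,
      filter_sdiff_eq_erase (Q := fun i => adj j i ∧ i ≠ v) (fun _ => Iff.rfl) hx]
    exact exists_insert_elim_pickMin_erase_eq hkey hx _

lemma greedyMatchU_delete_eq_pickMin_erase (hkey : Function.Injective key)
    (adj : ℕ → Fin n → Prop) (v : Fin n) (j : ℕ) :
    ∃ x, greedyMatchU (fun a b => adj a b ∧ b ≠ v) key j =
      pickMin key (((Finset.univ.filter fun i => adj j i) \ greedyRun adj key j).erase x) := by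
  obtain ⟨x, hx⟩ := exists_insert_greedyRun_delete_eq hkey adj v j
  refine ⟨x, ?_⟩
  rw [greedyMatchU, filter_sdiff_eq_erase (Q := fun i => adj j i ∧ i ≠ v) (fun _ => Iff.rfl) hx]

end Greedy

lemma priceKey_injective {n : ℕ} (p : Fin n → ℝ) : Function.Injective (priceKey p) :=
  fun _ _ h => Fin.ext (congrArg (fun k => (ofLex k).2) h)

lemma elim_pickMin_priceKey_le_of_subset {n : ℕ} {p : Fin n → ℝ} (hp : ∀ i, p i ≤ 1)
    {c' c : Finset (Fin n)} (hsub : c' ⊆ c) :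
    (pickMin (priceKey p) c').elim 0 (fun i => 1 - p i) ≤
      (pickMin (priceKey p) c).elim 0 (fun i => 1 - p i) := by
  rcases hc' : pickMin (priceKey p) c' with _ | m
  · rcases pickMin (priceKey p) c with _ | m₀
    · exact le_rfl
    · simpa using hp m₀
  · obtain ⟨m₀, hm₀, hle⟩ := exists_pickMin_le_of_subset hsub hc'
    have hp_le : p m₀ ≤ p m := by
      rcases Prod.Lex.le_iff.mp hle with hlt | ⟨heq, -⟩
      · exact hlt.le
      · exact heq.le
    simp only [hm₀, Option.elim_some]
    linarith

theorem stmt_16_general (n : ℕ) (adj : ℕ → Fin n → Prop) (p : Fin n → ℝ)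
    (hp1 : ∀ i, 1 / Real.exp 1 ≤ p i ∧ p i ≤ 1)
    (v : Fin n) (j : ℕ) :
    utility n (fun a b => adj a b ∧ b ≠ v) p j ≤ utility n adj p j := by
  obtain ⟨x, hx⟩ := greedyMatchU_delete_eq_pickMin_erase (priceKey_injective p) adj v j
  rw [utility, utility, hx]
  exact elim_pickMin_priceKey_le_of_subset (fun i => (hp1 i).2) (Finset.erase_subset _ _)

/-- Let `G(U,V;E)` be a bipartite graph with parts of size `n` (vertex `u_j` of `U` is
0-indexed by the arrival step `j < n`) with pairwise distinct prices `p i ∈ [1/e, 1]`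
on `V`. For every vertex `v ∈ V` and every buyer `u_j`, the utility of `u_j` in the
greedy-by-price process on `G` with `v` deleted is at most its utility in the
greedy-by-price process on `G`: removing an item never increases, and adding an item
never decreases, the utility of any buyer. -/
theorem stmt_16 (n : ℕ) (adj : ℕ → Fin n → Prop) (p : Fin n → ℝ)
    (hp1 : ∀ i, 1 / Real.exp 1 ≤ p i ∧ p i ≤ 1) (hp2 : Function.Injective p)
    (v : Fin n) (j : ℕ) (hj : j < n) :
    utility n (fun a b => adj a b ∧ b ≠ v) p j ≤ utility n adj p j :=
  stmt_16_general n adj p hp1 v j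

end
end
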